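/- For elementary cellular automaton Rule 105 on a ring of size n, a configuration is a fixed point of the parallel update if and only if n is a multiple of 4 and the configuration is one of the four rotations of the word (0011) repeated n/4 times. -/

import Mathlib

/-! Since `rule105 a b c = b ↔ c = !a`, a configuration is fixed exactly when `x (i + 2) = !x i`
for every cell, i.e. when it is a shift of `0011 0011 …`, fixed by `x 0` and `x 1`. Every step by 2
flips the state, so any walk by steps of 2 from cell `0` back to itself has even length: the walk of
`n` steps forces `n` even, and then the walk of `n / 2` steps forces `4 ∣ n`. -/

/-- Single-cell update: replace the state of cell `i` by the local rule applied
to its neighborhood on the ring `ZMod n`. -/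
def eupdate (n : ℕ) (f : Bool → Bool → Bool → Bool) (x : ZMod n → Bool) (i : ZMod n) :
    ZMod n → Bool :=
  Function.update x i (f (x (i - 1)) (x i) (x (i + 1)))

/-- Synchronous (parallel) step. -/
def parStep (n : ℕ) (f : Bool → Bool → Bool → Bool) (x : ZMod n → Bool) : ZMod n → Bool :=
  fun i => f (x (i - 1)) (x i) (x (i + 1))

/-- `x` is a fixed point of the parallel dynamics. -/
def IsFixedConfig (n : ℕ) (f : Bool → Bool → Bool → Bool) (x : ZMod n → Bool) : Prop :=
  ∀ i : ZMod n, f (x (i - 1)) (x i) (x (i + 1)) = x i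

/-- One full sequential step under the sequential update mode `μ`
(a permutation of the cells): update cells one at a time in the order
`μ 0, μ 1, …, μ (n-1)`. -/
def seqStep (n : ℕ) (f : Bool → Bool → Bool → Bool) (μ : Fin n ≃ ZMod n)
    (x : ZMod n → Bool) : ZMod n → Bool :=
  (List.finRange n).foldl (fun y k => eupdate n f y (μ k)) x

/-- One full sequential step under the descending order `(n-1, n-2, …, 0)`. -/
def seqStepDesc (n : ℕ) (f : Bool → Bool → Bool → Bool) (x : ZMod n → Bool) : ZMod n → Bool :=
  ((List.range n).reverse).foldl (fun y k => eupdate n f y (k : ZMod n)) x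

/-- One full sequential step under the ascending order `(0, 1, …, n-1)`. -/
def seqStepAsc (n : ℕ) (f : Bool → Bool → Bool → Bool) (x : ZMod n → Bool) : ZMod n → Bool :=
  (List.range n).foldl (fun y k => eupdate n f y (k : ZMod n)) x

def rule105 : Bool → Bool → Bool → Bool
  | true, true, true => false
  | true, true, false => true
  | true, false, true => true
  | true, false, false => false
  | false, true, true => true
  | false, true, false => false
  | false, false, true => false
  | false, false, false => true

theorem rule105_eq_self_iff (a b c : Bool) : rule105 a b c = b ↔ c = !a := by
  revert a b c; decide

theorem isFixedConfig_rule105_iff {n : ℕ} (x : ZMod n → Bool) :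
    IsFixedConfig n rule105 x ↔ ∀ i, x (i + 2) = !x i := by
  refine (Equiv.subRight (1 : ZMod n)).forall_congr fun {i} => ?_
  rw [rule105_eq_self_iff, Equiv.subRight_apply, show i - 1 + 2 = i + 1 by ring]

section AddTwoEqNot

variable {y : ℕ → Bool} (hy : ∀ m, y (m + 2) = !y m)
include hy

theorem add_two_mul_eq_xor_bodd (m j : ℕ) : y (m + 2 * j) = (y m ^^ j.bodd) := by
  induction j with
  | zero => simp
  | succ j ih => rw [Nat.mul_succ, ← add_assoc, hy, ih, Nat.bodd_succ, Bool.xor_not]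

theorem four_dvd_of_periodic {n : ℕ} (hper : ∀ m, y (m + n) = y m) : 4 ∣ n := by
  have bodd_eq_false {j : ℕ} (h : y (2 * j) = y 0) : j.bodd = false := by
    have h' := add_two_mul_eq_xor_bodd hy 0 j
    rw [zero_add, h] at h'
    simpa using congrArg (y 0 ^^ ·) h'
  have hn : n % 2 = 0 := by
    rw [Nat.mod_two_of_bodd, bodd_eq_false (by rw [two_mul, hper]; simpa using hper 0)]
    rfl
  obtain ⟨t, rfl⟩ : 2 ∣ n := Nat.dvd_of_mod_eq_zero hn
  have ht : t % 2 = 0 := by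
    rw [Nat.mod_two_of_bodd, bodd_eq_false (by simpa using hper 0)]
    rfl
  omega

theorem eq_of_add_two_eq_not {z : ℕ → Bool} (hz : ∀ m, z (m + 2) = !z m)
    (h0 : y 0 = z 0) (h1 : y 1 = z 1) : y = z := by
  funext m
  induction m using Nat.twoStepInduction with
  | zero => exact h0
  | one => exact h1
  | more m ihm _ => rw [hy, hz, ihm]

end AddTwoEqNot

def pattern0011 (m : ℕ) : Bool := decide (m % 4 = 2 ∨ m % 4 = 3)

theorem pattern0011_mod_four (m : ℕ) : pattern0011 (m % 4) = pattern0011 m := by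
  simp only [pattern0011, Nat.mod_mod]

theorem pattern0011_add_two (m : ℕ) : pattern0011 (m + 2) = !pattern0011 m := by
  rw [← pattern0011_mod_four, Nat.add_mod, ← pattern0011_mod_four m]
  have hm : m % 4 < 4 := Nat.mod_lt m (by norm_num)
  generalize m % 4 = r at hm ⊢
  interval_cases r <;> rfl

theorem exists_pattern0011_eq (a b : Bool) :
    ∃ k < 4, pattern0011 k = a ∧ pattern0011 (k + 1) = b := by
  revert a b; decide

theorem ZMod.val_add_natCast_mod_of_dvd {n d : ℕ} [NeZero n] (hd : d ∣ n) (i : ZMod n) (a : ℕ) :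
    (i + (a : ZMod n)).val % d = (i.val + a) % d := by
  rw [ZMod.val_add, ZMod.val_natCast, Nat.mod_mod_of_dvd _ hd, Nat.add_mod,
    Nat.mod_mod_of_dvd _ hd, ← Nat.add_mod]

theorem pattern0011_val_add_two {n : ℕ} [NeZero n] (h4 : 4 ∣ n) (i : ZMod n) (k : ℕ) :
    pattern0011 ((i + 2).val + k) = !pattern0011 (i.val + k) := by
  have hval : ((i + ((2 : ℕ) : ZMod n)).val + k) % 4 = (i.val + k + 2) % 4 := by
    rw [Nat.add_mod, ZMod.val_add_natCast_mod_of_dvd h4, ← Nat.add_mod]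
    omega
  rw [← pattern0011_add_two, ← pattern0011_mod_four, ← pattern0011_mod_four (_ + 2), ← hval,
    Nat.cast_ofNat]

theorem rule105_fixed_points (n : ℕ) (hn : 0 < n) (x : ZMod n → Bool) :
    IsFixedConfig n rule105 x ↔
      (4 ∣ n ∧ ∃ k < 4, ∀ i : ZMod n,
        x i = decide ((i.val + k) % 4 = 2 ∨ (i.val + k) % 4 = 3)) := by
  have : NeZero n := ⟨hn.ne'⟩
  rw [isFixedConfig_rule105_iff]
  constructor
  · intro hx
    set y : ℕ → Bool := fun m => x m
    have hy (m : ℕ) : y (m + 2) = !y m := by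
      simp only [y, ← hx]; push_cast; rfl
    have hper (m : ℕ) : y (m + n) = y m := by simp [y]
    obtain ⟨k, hk4, h0, h1⟩ := exists_pattern0011_eq (y 0) (y 1)
    have hpat : y = fun m => pattern0011 (m + k) :=
      eq_of_add_two_eq_not hy (fun m => by rw [add_right_comm, pattern0011_add_two])
        (by simp [h0]) (by simp [add_comm 1, h1])
    refine ⟨four_dvd_of_periodic hy hper, k, hk4, fun i => ?_⟩
    have hi := congrFun hpat i.val
    simp only [y, ZMod.natCast_zmod_val] at hi
    exact hi
  · rintro ⟨h4, k, -, hx⟩ i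
    rw [hx, hx]
    exact pattern0011_val_add_two h4 i k
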